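/- arXiv:2603.16763 — 2 statements merged into one kernel-verified Lean document; each statement's English description precedes it below -/
import Mathlib

section
/- Let R be a ring and M a right R-module of type FP_{n+1} for some n ≥ 1. Then for every index set I and every 0 < i ≤ n, Tor_i^R(M, ∏_{I} R) = 0, where ∏_I R denotes the direct product of copies of R viewed as a left R-module. -/
noncomputable section
open Function MulOpposite

/-- `IsFP S n M`: the `S`-module `M` is of type `FPₙ`. -/
def IsFP (S : Type) [Ring S] : ℕ → ModuleCat.{0} S → Prop
  | 0, M => Module.Finite S M
  | n+1, M => ∃ (d : ℕ) (φ : (Fin d → S) →ₗ[S] M), Function.Surjective φ ∧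
      IsFP S n (ModuleCat.of S (LinearMap.ker φ))

/-- Unbundled version of `IsFP`. -/
def IsFPMod (S : Type) [Ring S] (n : ℕ) (M : Type) [AddCommGroup M] [Module S M] : Prop :=
  IsFP S n (ModuleCat.of S M)

section RTensor

variable (R : Type) [Ring R] (M : Type) [AddCommGroup M] [Module Rᵐᵒᵖ M]
  (N : Type) [AddCommGroup N] [Module R N]

/-- The balancing relations for the tensor product of a right `R`-module `M`
(i.e. a left `Rᵐᵒᵖ`-module) and a left `R`-module `N`. -/
def RTensor.rel : AddSubgroup (TensorProduct ℤ M N) :=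
  AddSubgroup.closure {x | ∃ (r : R) (m : M) (n : N),
    x = ((op r • m) ⊗ₜ[ℤ] n) - (m ⊗ₜ[ℤ] (r • n))}

/-- The balanced tensor product `M ⊗_R N` of a right `R`-module and a left `R`-module,
as an abelian group. -/
def RTensor : Type := TensorProduct ℤ M N ⧸ RTensor.rel R M N

instance : AddCommGroup (RTensor R M N) :=
  inferInstanceAs (AddCommGroup (TensorProduct ℤ M N ⧸ RTensor.rel R M N))

/-- The canonical projection. -/
def RTensor.mk : TensorProduct ℤ M N →+ RTensor R M N :=
  QuotientAddGroup.mk' (RTensor.rel R M N)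

/-- Elementary tensors in `RTensor`. -/
def RTensor.tmul (m : M) (n : N) : RTensor R M N := RTensor.mk R M N (m ⊗ₜ[ℤ] n)

theorem RTensor.tmul_balanced (r : R) (m : M) (n : N) :
    RTensor.tmul R M N (op r • m) n = RTensor.tmul R M N m (r • n) := by
  refine (QuotientAddGroup.mk'_eq_mk' _).2 ⟨(m ⊗ₜ[ℤ] (r • n)) - ((op r • m) ⊗ₜ[ℤ] n), ?_, by abel⟩
  have h : ((op r • m) ⊗ₜ[ℤ] n) - (m ⊗ₜ[ℤ] (r • n)) ∈ RTensor.rel R M N :=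
    AddSubgroup.subset_closure ⟨r, m, n, rfl⟩
  simpa [neg_sub] using AddSubgroup.neg_mem _ h

theorem RTensor.tmul_add (m : M) (n n' : N) :
    RTensor.tmul R M N m (n + n') = RTensor.tmul R M N m n + RTensor.tmul R M N m n' := by
  rw [RTensor.tmul, TensorProduct.tmul_add, map_add]; rfl

theorem RTensor.add_tmul (m m' : M) (n : N) :
    RTensor.tmul R M N (m + m') n = RTensor.tmul R M N m n + RTensor.tmul R M N m' n := by
  rw [RTensor.tmul, TensorProduct.add_tmul, map_add]; rfl

theorem RTensor.tmul_zero (m : M) : RTensor.tmul R M N m 0 = 0 := by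
  rw [RTensor.tmul, TensorProduct.tmul_zero, map_zero]

theorem RTensor.zero_tmul (n : N) : RTensor.tmul R M N (0 : M) n = 0 := by
  rw [RTensor.tmul, TensorProduct.zero_tmul, map_zero]

variable {R M N}

/-- Lifting a balanced biadditive map to the balanced tensor product. -/
def RTensor.lift {A : Type} [AddCommGroup A] (f : M →+ N →+ A)
    (hf : ∀ (r : R) (m : M) (n : N), f (op r • m) n = f m (r • n)) :
    RTensor R M N →+ A := by
  refine QuotientAddGroup.lift (RTensor.rel R M N)
    (TensorProduct.lift (LinearMap.mk₂ ℤ (fun m n => f m n)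
      (by intro m₁ m₂ n; simp)
      (by intro z m n; simp)
      (by intro m n₁ n₂; simp)
      (by intro z m n; simp))).toAddMonoidHom ?_
  refine (AddSubgroup.closure_le _).2 ?_
  rintro x ⟨r, m, n, rfl⟩
  simp [hf r m n]

@[simp] theorem RTensor.lift_tmul {A : Type} [AddCommGroup A] (f : M →+ N →+ A)
    (hf : ∀ (r : R) (m : M) (n : N), f (op r • m) n = f m (r • n)) (m : M) (n : N) :
    RTensor.lift f hf (RTensor.tmul R M N m n) = f m n := by
  show QuotientAddGroup.lift _ _ _ (QuotientAddGroup.mk (m ⊗ₜ[ℤ] n)) = _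
  erw [QuotientAddGroup.lift_mk]

end RTensor

section Maps

variable (R : Type) [Ring R] (M : Type) [AddCommGroup M] [Module Rᵐᵒᵖ M]
  {N N' : Type} [AddCommGroup N] [Module R N] [AddCommGroup N'] [Module R N']

/-- Functoriality of the balanced tensor product in the left-module variable. -/
def RTensor.mapRight (g : N →ₗ[R] N') : RTensor R M N →+ RTensor R M N' :=
  RTensor.lift
    { toFun := fun m =>
        { toFun := fun n => RTensor.tmul R M N' m (g n)
          map_zero' := by
            show RTensor.tmul R M N' m (g 0) = 0
            rw [map_zero]; exact RTensor.tmul_zero R M N' m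
          map_add' := by
            intro n n'
            show RTensor.tmul R M N' m (g (n + n')) = _
            rw [map_add]; exact RTensor.tmul_add R M N' m _ _ }
      map_zero' := by
        ext n
        show RTensor.tmul R M N' 0 (g n) = 0
        exact RTensor.zero_tmul R M N' _
      map_add' := by
        intro m m'
        ext n
        show RTensor.tmul R M N' (m + m') (g n) = _
        exact RTensor.add_tmul R M N' m m' _ }
    (by
      intro r m n
      show RTensor.tmul R M N' (op r • m) (g n) = RTensor.tmul R M N' m (g (r • n))
      rw [map_smul]
      exact RTensor.tmul_balanced R M N' r m (g n))

end Maps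

section MapLeft

variable (R : Type) [Ring R] {M M' : Type} [AddCommGroup M] [Module Rᵐᵒᵖ M]
  [AddCommGroup M'] [Module Rᵐᵒᵖ M'] (N : Type) [AddCommGroup N] [Module R N]

/-- Functoriality of the balanced tensor product in the right-module variable. -/
def RTensor.mapLeft (g : M →ₗ[Rᵐᵒᵖ] M') : RTensor R M N →+ RTensor R M' N :=
  RTensor.lift
    { toFun := fun m =>
        { toFun := fun n => RTensor.tmul R M' N (g m) n
          map_zero' := RTensor.tmul_zero R M' N _
          map_add' := fun n n' => RTensor.tmul_add R M' N _ n n' }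
      map_zero' := by
        ext n
        show RTensor.tmul R M' N (g 0) n = 0
        rw [map_zero]; exact RTensor.zero_tmul R M' N n
      map_add' := by
        intro m m'
        ext n
        show RTensor.tmul R M' N (g (m + m')) n = _
        rw [map_add]; exact RTensor.add_tmul R M' N _ _ n }
    (by
      intro r m n
      show RTensor.tmul R M' N (g (op r • m)) n = RTensor.tmul R M' N (g m) (r • n)
      rw [map_smul]
      exact RTensor.tmul_balanced R M' N r (g m) n)

end MapLeft

section Resolutions

variable (S : Type) [Ring S] (N : Type) [AddCommGroup N] [Module S N]

/-- A free resolution `⋯ → F₂ → F₁ → F₀ → N → 0` of a left `S`-module `N`. -/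
structure FreeResolution : Type 1 where
  ι : ℕ → Type
  d : ∀ n : ℕ, ((ι (n+1)) →₀ S) →ₗ[S] ((ι n) →₀ S)
  augm : ((ι 0) →₀ S) →ₗ[S] N
  augm_surj : Function.Surjective augm
  exact_augm : Function.Exact (d 0) augm
  exact : ∀ n : ℕ, Function.Exact (d (n+1)) (d n)

variable (M : Type) [AddCommGroup M] [Module Sᵐᵒᵖ M]

/-- `TorVanishes S M N i` asserts that `Tor_i^S(M, N) = 0`, where `M` is a right
`S`-module and `N` is a left `S`-module: for every free resolution `F_• → N`, the
complex `M ⊗_S F_•` has trivial homology in degree `i`. -/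
def TorVanishes : ℕ → Prop
  | 0 => ∀ res : FreeResolution S N, Function.Surjective (RTensor.mapRight S M (res.d 0))
  | (i+1) => ∀ res : FreeResolution S N,
      Function.Exact (RTensor.mapRight S M (res.d (i+1))) (RTensor.mapRight S M (res.d i))

/-- A left `S`-module `N` is flat if `Tor₁^S(M, N) = 0` for every right `S`-module `M`. -/
def IsFlatModule : Prop :=
  ∀ (M : Type) [AddCommGroup M] [Module Sᵐᵒᵖ M], TorVanishes S N M 1

end Resolutions

/-- `Tor_i^S(M, N) = 0` for a right `S`-module `M` and a left `S`-module `N`. -/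
def TorIsZero (S : Type) [Ring S] (M : Type) [AddCommGroup M] [Module Sᵐᵒᵖ M]
    (N : Type) [AddCommGroup N] [Module S N] (i : ℕ) : Prop :=
  TorVanishes S N M i

section GroupRings

variable (R : Type) [Ring R] (G : Type) [Group G]

/-- The augmentation ring homomorphism `R[G] → R`, `∑ r_g g ↦ ∑ r_g`. -/
def augMap : MonoidAlgebra R G →+* R :=
  MonoidAlgebra.liftNCRingHom (RingHom.id R) (1 : G →* R)
    (fun x y => by simp [Commute.one_right])

/-- The augmentation ideal of `R[G]`, as a left ideal. -/
def augIdeal : Ideal (MonoidAlgebra R G) := RingHom.ker (augMap R G)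

/-- The augmentation ideal of `R[G]`, as a right `R[G]`-module. -/
def augIdealRight : Submodule (MonoidAlgebra R G)ᵐᵒᵖ (MonoidAlgebra R G) where
  carrier := {x | augMap R G x = 0}
  add_mem' := by
    intro a b ha hb
    simp only [Set.mem_setOf_eq, map_add] at *
    rw [ha, hb, add_zero]
  zero_mem' := by simp
  smul_mem' := by
    intro c x hx
    simp only [Set.mem_setOf_eq] at *
    have : c • x = x * c.unop := rfl
    rw [this, map_mul, hx, zero_mul]

/-- The trivial left `R[G]`-module structure on `R`. -/
def trivialModule : Module (MonoidAlgebra R G) R := Module.compHom R (augMap R G)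

/-- The trivial right `R[G]`-module structure on `R`. -/
def trivialModuleRight : Module (MonoidAlgebra R G)ᵐᵒᵖ R :=
  Module.compHom R (RingHom.op (augMap R G))

/-- The group `G` is of type `FPₙ(R)`: the trivial `R[G]`-module `R` is of type `FPₙ`. -/
def GroupIsFP (n : ℕ) : Prop :=
  letI := trivialModule R G
  IsFPMod (MonoidAlgebra R G) n R

end GroupRings
section Novikov

variable (R : Type) [Ring R] (G : Type) [Group G]

/-- Left multiplication by elements of `R` on functions `G → R`. -/
def lmulHom : R →+* Module.End ℤ (G → R) where
  toFun r :=
    { toFun := fun a x => r * a x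
      map_add' := by intro a b; funext x; simp [mul_add]
      map_smul' := by
        intro z a; funext x
        simp only [zsmul_eq_mul, Pi.intCast_apply, Pi.mul_apply, eq_intCast, RingHom.id_apply]
        rw [← mul_assoc, ← Int.cast_comm, mul_assoc]
        norm_cast }
  map_one' := by ext a x; simp
  map_mul' := by intro r s; ext a x; simp [mul_assoc]
  map_zero' := by ext a x; simp
  map_add' := by intro r s; ext a x; simp [add_mul]

/-- The (left) translation action of `G` on functions `G → R`. -/
def translationHom : G →* Module.End ℤ (G → R) where
  toFun h :=
    { toFun := fun a x => a (h⁻¹ * x)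
      map_add' := by intro a b; funext x; simp
      map_smul' := by intro z a; funext x; simp }
  map_one' := by ext a x; simp
  map_mul' := by intro g h; ext a x; simp [mul_assoc]

/-- The convolution action of `R[G]` on functions `G → R`, as a ring homomorphism
into additive endomorphisms. -/
def convolutionRho : MonoidAlgebra R G →+* Module.End ℤ (G → R) :=
  MonoidAlgebra.liftNCRingHom (lmulHom R G) (translationHom R G)
    (by
      intro r h
      ext a x
      simp [lmulHom, translationHom])

/-- The left `R[G]`-module structure on all functions `G → R` given by convolution. -/
def functionsModule : Module (MonoidAlgebra R G) (G → R) :=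
  Module.compHom (G → R) (convolutionRho R G)

/-- The defining support condition for the Novikov ring: for any `c`, only finitely many
elements of the support have `χ`-value at most `c`. -/
def NovikovSet (χ : G →* Multiplicative ℤ) : Set (G → R) :=
  {a | ∀ c : ℤ, {g : G | a g ≠ 0 ∧ (χ g).toAdd ≤ c}.Finite}

theorem NovikovSet.add_mem {χ : G →* Multiplicative ℤ} {a b : G → R}
    (ha : a ∈ NovikovSet R G χ) (hb : b ∈ NovikovSet R G χ) :
    a + b ∈ NovikovSet R G χ := by
  intro c
  refine ((ha c).union (hb c)).subset ?_
  rintro g ⟨hne, hle⟩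
  by_cases h1 : a g = 0
  · exact Or.inr ⟨by intro h2; exact hne (by simp [Pi.add_apply, h1, h2]), hle⟩
  · exact Or.inl ⟨h1, hle⟩

theorem NovikovSet.zero_mem (χ : G →* Multiplicative ℤ) : (0 : G → R) ∈ NovikovSet R G χ := by
  intro c
  convert Set.finite_empty using 1
  ext g; simp

theorem NovikovSet.single_smul_mem {χ : G →* Multiplicative ℤ} (h : G) (b : R) {a : G → R}
    (ha : a ∈ NovikovSet R G χ) :
    (fun x => b * a (h⁻¹ * x)) ∈ NovikovSet R G χ := by
  intro c
  refine ((ha (c - (χ h).toAdd)).image (fun g => h * g)).subset ?_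
  rintro g ⟨hne, hle⟩
  refine ⟨h⁻¹ * g, ⟨?_, ?_⟩, by simp⟩
  · intro h0
    apply hne
    show b * a (h⁻¹ * g) = 0
    rw [h0, mul_zero]
  · have hval : (χ (h⁻¹ * g)).toAdd = -(χ h).toAdd + (χ g).toAdd := by
      simp [map_mul]
    rw [hval]
    omega

/-- The Novikov completion `\widehat{R[G]}^χ` of `R[G]` at the character `χ`,
as a left `R[G]`-submodule of the module of all functions `G → R`. -/
def Novikov (χ : G →* Multiplicative ℤ) :
    @Submodule (MonoidAlgebra R G) (G → R) _ _ (functionsModule R G) :=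
  letI := functionsModule R G
  { carrier := NovikovSet R G χ
    add_mem' := by
      intro a b ha hb
      intro c
      refine ((ha c).union (hb c)).subset ?_
      intro g hg
      rcases hg with ⟨hne, hle⟩
      by_cases h1 : a g = 0
      · exact Or.inr ⟨by intro h2; exact hne (by simp [Pi.add_apply, h1, h2]), hle⟩
      · exact Or.inl ⟨h1, hle⟩
    zero_mem' := by
      intro c
      convert Set.finite_empty using 1
      ext g; simp
    smul_mem' := by
      intro c a ha
      show (convolutionRho R G c) a ∈ NovikovSet R G χ
      induction c using MonoidAlgebra.induction with
      | zero => simpa using NovikovSet.zero_mem R G χ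
      | single_add h b f _ _ ih =>
        rw [map_add]
        have hadd : (convolutionRho R G (MonoidAlgebra.single h b)
              + convolutionRho R G f) a
            = (convolutionRho R G (MonoidAlgebra.single h b)) a
              + (convolutionRho R G f) a := rfl
        rw [hadd]
        refine NovikovSet.add_mem R G ?_ ih
        have hsingle : (convolutionRho R G (MonoidAlgebra.single h b)) a
            = fun x => b * a (h⁻¹ * x) := by
          show (MonoidAlgebra.liftNC ((lmulHom R G) : R →+ Module.End ℤ (G → R))
              ⇑(translationHom R G)) (MonoidAlgebra.single h b) a = _
          rw [MonoidAlgebra.liftNC_single]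
          rfl
        rw [hsingle]
        exact NovikovSet.single_smul_mem R G h b ha }

end Novikov


/-! Dimension shifting along a free resolution of `∏_I R`. For a finitely presented right module
`A` the comparison map `A ⊗ ∏_I R → ∏_I A` is injective (it is bijective for `A` finite free, and
both sides are right exact in `A`), so `Tor₁(C, ∏_I R) = 0` for every `C` of type `FP_2`. If
`0 → K → F → Q → 0` is exact with `F` free and `Tor₁(C, Q) = 0` for all `C` of type `FP_{i+2}`,
then `Tor₁(C, K) = 0` for all `C` of type `FP_{i+3}`, because `Tor₁` can be computed from a
presentation of either variable. Hence the `m`-th syzygy `Q_m` of `∏_I R` satisfies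
`Tor₁(M, Q_m) = 0` when `M` is of type `FP_{m+2}`, and this is `Tor_{m+1}(M, ∏_I R)`. -/

attribute [simp] RTensor.tmul_zero RTensor.zero_tmul

section Basics

variable {R : Type} [Ring R] {M M' M'' : Type} [AddCommGroup M] [Module Rᵐᵒᵖ M]
  [AddCommGroup M'] [Module Rᵐᵒᵖ M'] [AddCommGroup M''] [Module Rᵐᵒᵖ M'']
  {N N' N'' : Type} [AddCommGroup N] [Module R N] [AddCommGroup N'] [Module R N']
  [AddCommGroup N''] [Module R N'']

@[elab_as_elim]
theorem RTensor.induction_on {C : RTensor R M N → Prop} (x : RTensor R M N) (zero : C 0)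
    (tmul : ∀ m n, C (RTensor.tmul R M N m n)) (add : ∀ x y, C x → C y → C (x + y)) : C x := by
  obtain ⟨t, rfl⟩ := QuotientAddGroup.mk'_surjective (RTensor.rel R M N) x
  induction t using TensorProduct.induction_on with
  | zero => exact zero
  | tmul m n => exact tmul m n
  | add a b ha hb => rw [map_add]; exact add _ _ ha hb

theorem RTensor.addHom_ext {A : Type} [AddCommGroup A] {f g : RTensor R M N →+ A}
    (h : ∀ m n, f (RTensor.tmul R M N m n) = g (RTensor.tmul R M N m n)) : f = g :=
  AddMonoidHom.ext fun x => x.induction_on (by simp only [map_zero]) h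
    fun x y hx hy => by simp only [map_add, hx, hy]

def RTensor.tmulRight (m : M) : N →+ RTensor R M N :=
  AddMonoidHom.mk' (RTensor.tmul R M N m) (RTensor.tmul_add R M N m)

def RTensor.tmulLeft (n : N) : M →+ RTensor R M N :=
  AddMonoidHom.mk' (RTensor.tmul R M N · n) fun m m' => RTensor.add_tmul R M N m m' n

@[simp] theorem RTensor.tmulRight_apply (m : M) (n : N) :
    RTensor.tmulRight m n = RTensor.tmul R M N m n := rfl

@[simp] theorem RTensor.tmulLeft_apply (m : M) (n : N) :
    RTensor.tmulLeft n m = RTensor.tmul R M N m n := rfl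

@[simp] theorem RTensor.mapRight_tmul (g : N →ₗ[R] N') (m : M) (n : N) :
    RTensor.mapRight R M g (RTensor.tmul R M N m n) = RTensor.tmul R M N' m (g n) :=
  RTensor.lift_tmul _ _ m n

@[simp] theorem RTensor.mapLeft_tmul (g : M →ₗ[Rᵐᵒᵖ] M') (m : M) (n : N) :
    RTensor.mapLeft R N g (RTensor.tmul R M N m n) = RTensor.tmul R M' N (g m) n :=
  RTensor.lift_tmul _ _ m n

theorem RTensor.mapRight_comp (g : N →ₗ[R] N') (g' : N' →ₗ[R] N'') :
    RTensor.mapRight R M (g' ∘ₗ g) = (RTensor.mapRight R M g').comp (RTensor.mapRight R M g) :=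
  RTensor.addHom_ext fun m n => by simp

theorem RTensor.mapLeft_comp (g : M →ₗ[Rᵐᵒᵖ] M') (g' : M' →ₗ[Rᵐᵒᵖ] M'') :
    RTensor.mapLeft R N (g' ∘ₗ g) = (RTensor.mapLeft R N g').comp (RTensor.mapLeft R N g) :=
  RTensor.addHom_ext fun m n => by simp

theorem RTensor.mapLeft_mapRight (g : M →ₗ[Rᵐᵒᵖ] M') (h : N →ₗ[R] N') (x : RTensor R M N) :
    RTensor.mapLeft R N' g (RTensor.mapRight R M h x)
      = RTensor.mapRight R M' h (RTensor.mapLeft R N g x) := by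
  induction x using RTensor.induction_on with
  | zero => simp
  | tmul m n => simp
  | add x y hx hy => simp only [map_add, hx, hy]

theorem RTensor.mapRight_zero : RTensor.mapRight R M (0 : N →ₗ[R] N') = 0 :=
  RTensor.addHom_ext fun m n => by simp

theorem RTensor.mapLeft_zero : RTensor.mapLeft R N (0 : M →ₗ[Rᵐᵒᵖ] M') = 0 :=
  RTensor.addHom_ext fun m n => by simp

variable {A : Type} [AddCommGroup A]

theorem RTensor.exists_comp_mapRight_eq {g : N →ₗ[R] N'} (hg : Surjective g)
    (π : RTensor R M N →+ A) (hπ : ∀ m n, g n = 0 → π (RTensor.tmul R M N m n) = 0) :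
    ∃ s : RTensor R M N' →+ A, s.comp (RTensor.mapRight R M g) = π := by
  have hπ' : ∀ m a b, g a = g b → π (RTensor.tmul R M N m a) = π (RTensor.tmul R M N m b) :=
    fun m a b h => by
      rw [← sub_eq_zero, ← map_sub, ← RTensor.tmulRight_apply, ← RTensor.tmulRight_apply,
        ← map_sub]
      exact hπ m _ (by rw [map_sub, h, sub_self])
  refine ⟨RTensor.lift (AddMonoidHom.mk' (fun m => AddMonoidHom.mk'
      (fun n' => π (RTensor.tmul R M N m (surjInv hg n'))) fun a b => ?_) fun m m' => ?_)
      fun r m n' => ?_, RTensor.addHom_ext fun m n => ?_⟩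
  · rw [← map_add, ← RTensor.tmul_add]
    exact hπ' _ _ _ (by simp [surjInv_eq hg])
  · ext n'
    simp [RTensor.add_tmul]
  · simp only [AddMonoidHom.mk'_apply]
    rw [RTensor.tmul_balanced]
    exact hπ' _ _ _ (by simp [surjInv_eq hg])
  · simp only [AddMonoidHom.comp_apply, RTensor.mapRight_tmul, RTensor.lift_tmul,
      AddMonoidHom.mk'_apply]
    exact hπ' _ _ _ (surjInv_eq hg _)

theorem RTensor.exists_comp_mapLeft_eq {g : M →ₗ[Rᵐᵒᵖ] M'} (hg : Surjective g)
    (π : RTensor R M N →+ A) (hπ : ∀ m n, g m = 0 → π (RTensor.tmul R M N m n) = 0) :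
    ∃ s : RTensor R M' N →+ A, s.comp (RTensor.mapLeft R N g) = π := by
  have hπ' : ∀ a b n, g a = g b → π (RTensor.tmul R M N a n) = π (RTensor.tmul R M N b n) :=
    fun a b n h => by
      rw [← sub_eq_zero, ← map_sub, ← RTensor.tmulLeft_apply, ← RTensor.tmulLeft_apply,
        ← map_sub]
      exact hπ _ n (by rw [map_sub, h, sub_self])
  refine ⟨RTensor.lift (AddMonoidHom.mk' (fun m' => AddMonoidHom.mk'
      (fun n => π (RTensor.tmul R M N (surjInv hg m') n)) fun a b => ?_) fun a b => ?_)
      fun r m' n => ?_, RTensor.addHom_ext fun m n => ?_⟩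
  · rw [← map_add, ← RTensor.tmul_add]
  · ext n
    simp only [AddMonoidHom.mk'_apply, AddMonoidHom.add_apply]
    rw [← map_add, ← RTensor.add_tmul]
    exact hπ' _ _ _ (by simp [surjInv_eq hg])
  · simp only [AddMonoidHom.mk'_apply]
    rw [← RTensor.tmul_balanced]
    exact hπ' _ _ _ (by simp [surjInv_eq hg])
  · simp only [AddMonoidHom.comp_apply, RTensor.mapLeft_tmul, RTensor.lift_tmul,
      AddMonoidHom.mk'_apply]
    exact hπ' _ _ _ (surjInv_eq hg _)

theorem RTensor.mapRight_exact {f : N →ₗ[R] N'} {g : N' →ₗ[R] N''} (hfg : Exact f g)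
    (hg : Surjective g) : Exact (RTensor.mapRight R M f) (RTensor.mapRight R M g) := by
  set H := (RTensor.mapRight R M f).range
  obtain ⟨s, hs⟩ := RTensor.exists_comp_mapRight_eq hg (QuotientAddGroup.mk' H) fun m n hn => by
    obtain ⟨n₀, rfl⟩ := (hfg n).1 hn
    exact (QuotientAddGroup.eq_zero_iff (N := H) _).2
      ⟨RTensor.tmul R M N m n₀, RTensor.mapRight_tmul ..⟩
  refine Exact.of_comp_of_mem_range ?_ fun y hy => ?_
  · rw [← AddMonoidHom.coe_comp, ← RTensor.mapRight_comp, hfg.linearMap_comp_eq_zero,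
      RTensor.mapRight_zero]
    rfl
  · refine (QuotientAddGroup.eq_zero_iff (N := H) y).1 ?_
    rw [← QuotientAddGroup.mk'_apply, ← hs, AddMonoidHom.comp_apply, hy, map_zero]

theorem RTensor.mapLeft_exact {f : M →ₗ[Rᵐᵒᵖ] M'} {g : M' →ₗ[Rᵐᵒᵖ] M''} (hfg : Exact f g)
    (hg : Surjective g) : Exact (RTensor.mapLeft R N f) (RTensor.mapLeft R N g) := by
  set H := (RTensor.mapLeft R N f).range
  obtain ⟨s, hs⟩ := RTensor.exists_comp_mapLeft_eq hg (QuotientAddGroup.mk' H) fun m n hm => by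
    obtain ⟨m₀, rfl⟩ := (hfg m).1 hm
    exact (QuotientAddGroup.eq_zero_iff (N := H) _).2
      ⟨RTensor.tmul R M N m₀ n, RTensor.mapLeft_tmul ..⟩
  refine Exact.of_comp_of_mem_range ?_ fun y hy => ?_
  · rw [← AddMonoidHom.coe_comp, ← RTensor.mapLeft_comp, hfg.linearMap_comp_eq_zero,
      RTensor.mapLeft_zero]
    rfl
  · refine (QuotientAddGroup.eq_zero_iff (N := H) y).1 ?_
    rw [← QuotientAddGroup.mk'_apply, ← hs, AddMonoidHom.comp_apply, hy, map_zero]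

theorem RTensor.mapLeft_surjective {g : M →ₗ[Rᵐᵒᵖ] M'} (hg : Surjective g) :
    Surjective (RTensor.mapLeft R N g) := by
  intro x
  induction x using RTensor.induction_on with
  | zero => exact ⟨0, map_zero _⟩
  | tmul m n => exact ⟨RTensor.tmul R M N (surjInv hg m) n, by simp [surjInv_eq hg]⟩
  | add x y hx hy =>
    obtain ⟨x, rfl⟩ := hx
    obtain ⟨y, rfl⟩ := hy
    exact ⟨x + y, map_add _ _ _⟩

end Basics

section FreeModules

variable {R : Type} [Ring R]

def RTensor.finFreeHom (d : ℕ) (Q : Type) [AddCommGroup Q] [Module R Q] :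
    RTensor R (Fin d → Rᵐᵒᵖ) Q →+ (Fin d → Q) :=
  RTensor.lift
    (AddMonoidHom.mk' (fun v => AddMonoidHom.mk' (fun q j => (v j).unop • q)
      fun q q' => by ext j; simp [smul_add]) fun v v' => by ext q j; simp [add_smul])
    fun r v q => by ext j; simp [mul_smul]

@[simp] theorem RTensor.finFreeHom_tmul {d : ℕ} {Q : Type} [AddCommGroup Q] [Module R Q]
    (v : Fin d → Rᵐᵒᵖ) (q : Q) :
    RTensor.finFreeHom d Q (RTensor.tmul R (Fin d → Rᵐᵒᵖ) Q v q) = fun j => (v j).unop • q :=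
  RTensor.lift_tmul _ _ v q

theorem Pi.smul_single_one {ι S : Type*} [DecidableEq ι] [Semiring S] (c : S) (j : ι) :
    c • (Pi.single j 1 : ι → S) = Pi.single j c := by
  rw [← Pi.single_smul, smul_eq_mul, mul_one]

def RTensor.finFreeEquiv (d : ℕ) (Q : Type) [AddCommGroup Q] [Module R Q] :
    RTensor R (Fin d → Rᵐᵒᵖ) Q ≃+ (Fin d → Q) :=
  (RTensor.finFreeHom d Q).toAddEquiv
    (∑ j, (RTensor.tmulRight (Pi.single j 1)).comp (Pi.evalAddMonoidHom (fun _ => Q) j))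
    (RTensor.addHom_ext fun v q => by
      simp only [AddMonoidHom.comp_apply, RTensor.finFreeHom_tmul, AddMonoidHom.finsetSum_apply,
        Pi.evalAddMonoidHom_apply, RTensor.tmulRight_apply, AddMonoidHom.id_apply]
      simp_rw [← RTensor.tmul_balanced, op_unop, Pi.smul_single_one, ← RTensor.tmulLeft_apply,
        ← map_sum, Finset.univ_sum_single])
    (AddMonoidHom.ext fun h => funext fun k => by
      simp [Pi.single_apply, apply_ite unop])

theorem RTensor.finFreeHom_mapRight {d : ℕ} {Q Q' : Type} [AddCommGroup Q] [Module R Q]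
    [AddCommGroup Q'] [Module R Q'] (g : Q →ₗ[R] Q') (x : RTensor R (Fin d → Rᵐᵒᵖ) Q) :
    RTensor.finFreeHom d Q' (RTensor.mapRight R _ g x) = g ∘ RTensor.finFreeHom d Q x := by
  induction x using RTensor.induction_on with
  | zero => ext; simp
  | tmul v q => ext; simp
  | add x y hx hy => ext j; simp only [map_add, Pi.add_apply, hx, hy, Function.comp_apply]

theorem RTensor.mapRight_injective_of_finFree {d : ℕ} {Q Q' : Type} [AddCommGroup Q]
    [Module R Q] [AddCommGroup Q'] [Module R Q'] {g : Q →ₗ[R] Q'} (hg : Injective g) :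
    Injective (RTensor.mapRight R (Fin d → Rᵐᵒᵖ) g) := by
  refine Injective.of_comp (f := RTensor.finFreeEquiv d Q') ?_
  have h : ⇑(RTensor.finFreeEquiv d Q') ∘ RTensor.mapRight R _ g
      = (g ∘ ·) ∘ RTensor.finFreeEquiv d Q :=
    funext (RTensor.finFreeHom_mapRight g)
  rw [h]
  exact hg.comp_left.comp (AddEquiv.injective _)

end FreeModules

section Products

variable {R : Type} [Ring R]

def RTensor.toPi (I A : Type) [AddCommGroup A] [Module Rᵐᵒᵖ A] :
    RTensor R A (I → R) →+ (I → A) :=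
  RTensor.lift
    (AddMonoidHom.mk' (fun a => AddMonoidHom.mk' (fun f α => op (f α) • a)
      fun f f' => by ext α; simp [add_smul]) fun a a' => by ext f α; simp [smul_add])
    fun r a f => by ext α; simp [mul_smul]

@[simp] theorem RTensor.toPi_tmul {I A : Type} [AddCommGroup A] [Module Rᵐᵒᵖ A]
    (a : A) (f : I → R) : RTensor.toPi I A (RTensor.tmul R A (I → R) a f) = fun α => op (f α) • a :=
  RTensor.lift_tmul _ _ a f

theorem RTensor.toPi_mapLeft {I A A' : Type} [AddCommGroup A] [Module Rᵐᵒᵖ A] [AddCommGroup A']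
    [Module Rᵐᵒᵖ A'] (g : A →ₗ[Rᵐᵒᵖ] A') (x : RTensor R A (I → R)) :
    RTensor.toPi I A' (RTensor.mapLeft R _ g x) = g ∘ RTensor.toPi I A x := by
  induction x using RTensor.induction_on with
  | zero => ext; simp
  | tmul a f => ext; simp
  | add x y hx hy => ext α; simp only [map_add, Pi.add_apply, hx, hy, Function.comp_apply]

theorem RTensor.toPi_bijective_of_finFree (I : Type) (d : ℕ) :
    Bijective (RTensor.toPi (R := R) I (Fin d → Rᵐᵒᵖ)) := by
  have h : ⇑(RTensor.toPi (R := R) I (Fin d → Rᵐᵒᵖ))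
      = (fun h α j => op (h j α)) ∘ RTensor.finFreeEquiv d (I → R) := by
    funext x α j
    induction x using RTensor.induction_on with
    | zero => simp
    | tmul v f => simp [RTensor.finFreeEquiv]
    | add x y hx hy => simp only [map_add, Pi.add_apply, hx, hy, Function.comp_apply, op_add]
  rw [h]
  exact (bijective_iff_has_inverse.2 ⟨fun h j α => (h α j).unop, fun _ => rfl, fun _ => rfl⟩).comp
    (AddEquiv.bijective _)

end Products

section FinsuppFree

variable {R : Type} [Ring R]

def RTensor.finsuppHom (ι A : Type) [AddCommGroup A] [Module Rᵐᵒᵖ A] :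
    RTensor R A (ι →₀ R) →+ (ι →₀ A) :=
  RTensor.lift
    (AddMonoidHom.mk' (fun a => AddMonoidHom.mk'
      (fun f => Finsupp.mapRange (fun r => op r • a) (by simp) f)
      fun f f' => Finsupp.mapRange_add (fun r r' => by simp [add_smul]) f f')
      fun a a' => by ext f i; simp [smul_add])
    fun r a f => by ext i; simp [mul_smul]

@[simp] theorem RTensor.finsuppHom_tmul {ι A : Type} [AddCommGroup A] [Module Rᵐᵒᵖ A] (a : A)
    (f : ι →₀ R) :
    RTensor.finsuppHom ι A (RTensor.tmul R A (ι →₀ R) a f)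
      = Finsupp.mapRange (fun r => op r • a) (by simp) f :=
  RTensor.lift_tmul _ _ a f

def RTensor.finsuppEquiv (ι A : Type) [AddCommGroup A] [Module Rᵐᵒᵖ A] :
    RTensor R A (ι →₀ R) ≃+ (ι →₀ A) :=
  (RTensor.finsuppHom ι A).toAddEquiv
    (Finsupp.liftAddHom fun i => RTensor.tmulLeft (Finsupp.single i 1))
    (RTensor.addHom_ext fun a f => by
      simp only [AddMonoidHom.comp_apply, RTensor.finsuppHom_tmul, Finsupp.liftAddHom_apply,
        AddMonoidHom.id_apply]
      rw [Finsupp.sum_mapRange_index (by simp)]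
      simp_rw [RTensor.tmulLeft_apply, RTensor.tmul_balanced, Finsupp.smul_single_one,
        ← RTensor.tmulRight_apply, ← map_finsuppSum, Finsupp.sum_single])
    (Finsupp.addHom_ext fun i a => by simp)

theorem RTensor.finsuppEquiv_symm_mapRange {ι A A' : Type} [AddCommGroup A] [Module Rᵐᵒᵖ A]
    [AddCommGroup A'] [Module Rᵐᵒᵖ A'] (g : A →ₗ[Rᵐᵒᵖ] A') (h : ι →₀ A) :
    (RTensor.finsuppEquiv ι A').symm (Finsupp.mapRange g (map_zero g) h)
      = RTensor.mapLeft R _ g ((RTensor.finsuppEquiv ι A).symm h) := by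
  induction h using Finsupp.induction_linear with
  | zero => simp
  | add h h' hh hh' => simp only [Finsupp.mapRange_add (map_add g), map_add, hh, hh']
  | single i a => simp [RTensor.finsuppEquiv]

theorem RTensor.mapLeft_injective_of_finsupp {ι A A' : Type} [AddCommGroup A] [Module Rᵐᵒᵖ A]
    [AddCommGroup A'] [Module Rᵐᵒᵖ A'] {g : A →ₗ[Rᵐᵒᵖ] A'} (hg : Injective g) :
    Injective (RTensor.mapLeft R (ι →₀ R) g) := by
  have h : ⇑(RTensor.mapLeft R (ι →₀ R) g)
      = (RTensor.finsuppEquiv ι A').symm ∘ Finsupp.mapRange g (map_zero g)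
        ∘ RTensor.finsuppEquiv ι A := by
    funext x
    simp [RTensor.finsuppEquiv_symm_mapRange]
  rw [h]
  exact (AddEquiv.injective _).comp
    ((Finsupp.mapRange_injective g (map_zero g) hg).comp (AddEquiv.injective _))

end FinsuppFree

section Finiteness

variable {S : Type} [Ring S]

theorem isFPMod_succ_iff {n : ℕ} {A : Type} [AddCommGroup A] [Module S A] :
    IsFPMod S (n + 1) A ↔ ∃ (d : ℕ) (φ : (Fin d → S) →ₗ[S] A),
      Surjective φ ∧ IsFPMod S n (LinearMap.ker φ) :=
  Iff.rfl

theorem IsFP.of_succ : ∀ {n : ℕ} {A : ModuleCat.{0} S}, IsFP S (n + 1) A → IsFP S n A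
  | 0, _, ⟨_, φ, hφ, _⟩ => Module.Finite.of_surjective φ hφ
  | _ + 1, _, ⟨d, φ, hφ, h⟩ => ⟨d, φ, hφ, h.of_succ⟩

theorem IsFPMod.of_le {m n : ℕ} (h : m ≤ n) {A : Type} [AddCommGroup A] [Module S A] :
    IsFPMod S n A → IsFPMod S m A := by
  induction h with
  | refl => exact id
  | step _ ih => exact fun hA => ih (IsFP.of_succ hA)

end Finiteness

section Flatness

variable {R : Type} [Ring R]

theorem RTensor.toPi_injective_of_isFPMod_one (I : Type) {A : Type} [AddCommGroup A]
    [Module Rᵐᵒᵖ A] (hA : IsFPMod Rᵐᵒᵖ 1 A) : Injective (RTensor.toPi (R := R) I A) := by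
  obtain ⟨b, φ, hφ, hker⟩ := isFPMod_succ_iff.1 hA
  have : Module.Finite Rᵐᵒᵖ (LinearMap.ker φ) := hker
  obtain ⟨a, ψ, hψ⟩ := Module.Finite.exists_fin' Rᵐᵒᵖ (LinearMap.ker φ)
  set θ := (LinearMap.ker φ).subtype ∘ₗ ψ
  have hθφ : Exact θ φ := hψ.comp_exact_iff_exact.2 (LinearMap.exact_subtype_ker_map φ)
  rw [injective_iff_map_eq_zero]
  intro x hx
  obtain ⟨y, rfl⟩ := RTensor.mapLeft_surjective hφ x
  have hy : ∀ α, φ (RTensor.toPi I _ y α) = 0 := fun α => by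
    rw [← Function.comp_apply (f := φ), ← RTensor.toPi_mapLeft, hx, Pi.zero_apply]
  choose c hc using fun α => (hθφ _).1 (hy α)
  obtain ⟨z, hz⟩ := (RTensor.toPi_bijective_of_finFree I a).2 c
  have hzy : RTensor.mapLeft R _ θ z = y :=
    (RTensor.toPi_bijective_of_finFree I b).1 (by rw [RTensor.toPi_mapLeft, hz]; exact funext hc)
  rw [← hzy, ← AddMonoidHom.comp_apply, ← RTensor.mapLeft_comp, hθφ.linearMap_comp_eq_zero,
    RTensor.mapLeft_zero, AddMonoidHom.zero_apply]

/-- `FPFlat R i Q` says that `Tor₁^R(C, Q) = 0` for every right module `C` of type `FP_{i+2}`,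
phrased through a presentation `0 → A → R^e → C → 0` with `A` of type `FP_{i+1}`. -/
def FPFlat (R : Type) [Ring R] (i : ℕ) (Q : Type) [AddCommGroup Q] [Module R Q] : Prop :=
  ∀ (A : Type) [AddCommGroup A] [Module Rᵐᵒᵖ A], IsFPMod Rᵐᵒᵖ (i + 1) A →
    ∀ (e : ℕ) (g : A →ₗ[Rᵐᵒᵖ] (Fin e → Rᵐᵒᵖ)), Injective g → Injective (RTensor.mapLeft R Q g)

theorem fpFlat_pi (I : Type) : FPFlat R 0 (I → R) := by
  intro A _ _ hA e g hg
  refine Injective.of_comp (f := RTensor.toPi I (Fin e → Rᵐᵒᵖ)) ?_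
  have h : ⇑(RTensor.toPi I _) ∘ RTensor.mapLeft R _ g = (g ∘ ·) ∘ RTensor.toPi I A :=
    funext (RTensor.toPi_mapLeft g)
  rw [h]
  exact hg.comp_left.comp (RTensor.toPi_injective_of_isFPMod_one I hA)

variable {A L : Type} [AddCommGroup A] [Module Rᵐᵒᵖ A] [AddCommGroup L] [Module Rᵐᵒᵖ L]
  {K F Q : Type} [AddCommGroup K] [Module R K] [AddCommGroup F] [Module R F]
  [AddCommGroup Q] [Module R Q]

theorem RTensor.mapRight_injective_of_mapLeft_injective {d : ℕ}
    {κ : L →ₗ[Rᵐᵒᵖ] (Fin d → Rᵐᵒᵖ)} {φ : (Fin d → Rᵐᵒᵖ) →ₗ[Rᵐᵒᵖ] A} (hκφ : Exact κ φ)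
    (hφ : Surjective φ) {ι : K →ₗ[R] F} {ψ : F →ₗ[R] Q} (hιψ : Exact ι ψ) (hψ : Surjective ψ)
    (hι : Injective ι) (hκ : Injective (RTensor.mapLeft R Q κ)) :
    Injective (RTensor.mapRight R A ι) := by
  -- both `ker (L ⊗ Q → R^d ⊗ Q)` and `ker (A ⊗ K → A ⊗ F)` are `Tor₁(A, Q)`; chase through
  -- the square of tensor products of `L → R^d → A` with `K → F → Q`
  rw [injective_iff_map_eq_zero]
  intro x hx
  obtain ⟨y, rfl⟩ := RTensor.mapLeft_surjective (N := K) hφ x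
  obtain ⟨w, hw⟩ := (RTensor.mapLeft_exact (N := F) hκφ hφ (RTensor.mapRight R _ ι y)).1
    (by rwa [RTensor.mapLeft_mapRight])
  have hw0 : RTensor.mapRight R _ ψ w = 0 := hκ <| by
    rw [RTensor.mapLeft_mapRight, hw, ← AddMonoidHom.comp_apply, ← RTensor.mapRight_comp,
      hιψ.linearMap_comp_eq_zero, RTensor.mapRight_zero, AddMonoidHom.zero_apply, map_zero]
  obtain ⟨u, hu⟩ := (RTensor.mapRight_exact (M := L) hιψ hψ w).1 hw0
  have hy : RTensor.mapLeft R _ κ u = y :=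
    RTensor.mapRight_injective_of_finFree hι (by rw [← RTensor.mapLeft_mapRight, hu, hw])
  rw [← hy, ← AddMonoidHom.comp_apply, ← RTensor.mapLeft_comp, hκφ.linearMap_comp_eq_zero,
    RTensor.mapLeft_zero, AddMonoidHom.zero_apply]

theorem FPFlat.of_exact {i : ℕ} (hQ : FPFlat R i Q) {ι : Type} {f : K →ₗ[R] (ι →₀ R)}
    {ψ : (ι →₀ R) →ₗ[R] Q} (hf : Injective f) (hfψ : Exact f ψ) (hψ : Surjective ψ) :
    FPFlat R (i + 1) K := by
  intro A _ _ hA e g hg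
  obtain ⟨d, φ, hφ, hker⟩ := isFPMod_succ_iff.1 hA
  have hAf : Injective (RTensor.mapRight R A f) :=
    RTensor.mapRight_injective_of_mapLeft_injective (LinearMap.exact_subtype_ker_map φ) hφ hfψ
      hψ hf (hQ _ hker d _ (Submodule.injective_subtype _))
  have h : RTensor.mapRight R _ f ∘ RTensor.mapLeft R K g
      = RTensor.mapLeft R _ g ∘ RTensor.mapRight R A f :=
    funext fun x => (RTensor.mapLeft_mapRight g f x).symm
  exact Injective.of_comp (f := RTensor.mapRight R _ f) <| by
    rw [h]
    exact (RTensor.mapLeft_injective_of_finsupp hg).comp hAf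

end Flatness

section Resolutions

variable {R : Type} [Ring R] {F₀ F₁ F₂ Q : Type} [AddCommGroup F₀] [Module R F₀]
  [AddCommGroup F₁] [Module R F₁] [AddCommGroup F₂] [Module R F₂] [AddCommGroup Q] [Module R Q]
  {d₁ : F₂ →ₗ[R] F₁} {d₀ : F₁ →ₗ[R] F₀}

theorem Function.Exact.rangeRestrict (h : Exact d₁ d₀) : Exact d₁ d₀.rangeRestrict :=
  LinearMap.exact_iff.2 (by rw [LinearMap.ker_rangeRestrict]; exact h.linearMap_ker_eq)

theorem Function.Exact.range_subtype {ψ : F₀ →ₗ[R] Q} (h : Exact d₀ ψ) :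
    Exact (LinearMap.range d₀).subtype ψ :=
  LinearMap.exact_iff.2 (by rw [Submodule.range_subtype]; exact h.linearMap_ker_eq)

theorem RTensor.mapRight_exact_of_injective {M : Type} [AddCommGroup M] [Module Rᵐᵒᵖ M]
    (h : Exact d₁ d₀) (hinj : Injective (RTensor.mapRight R M (LinearMap.range d₀).subtype)) :
    Exact (RTensor.mapRight R M d₁) (RTensor.mapRight R M d₀) := by
  have hd₀ : ⇑(RTensor.mapRight R M d₀)
      = RTensor.mapRight R M (LinearMap.range d₀).subtype
        ∘ RTensor.mapRight R M d₀.rangeRestrict := by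
    rw [← AddMonoidHom.coe_comp, ← RTensor.mapRight_comp]
    rfl
  rw [hd₀]
  exact (RTensor.mapRight_exact h.rangeRestrict d₀.surjective_rangeRestrict).comp_injective _ hinj
    (map_zero _)

theorem FreeResolution.exists_fpFlat_syzygy {N : Type} [AddCommGroup N] [Module R N]
    (hN : FPFlat R 0 N) (res : FreeResolution R N) :
    ∀ j, ∃ (Q : Type) (_ : AddCommGroup Q) (_ : Module R Q) (ψ : (res.ι j →₀ R) →ₗ[R] Q),
      Surjective ψ ∧ Exact (res.d j) ψ ∧ FPFlat R j Q
  | 0 => ⟨N, _, _, res.augm, res.augm_surj, res.exact_augm, hN⟩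
  | j + 1 => by
    obtain ⟨Q, _, _, ψ, hψ, hdψ, hQ⟩ := exists_fpFlat_syzygy hN res j
    exact ⟨LinearMap.range (res.d j), _, _, (res.d j).rangeRestrict,
      (res.d j).surjective_rangeRestrict, (res.exact j).rangeRestrict,
      hQ.of_exact (Submodule.injective_subtype _) hdψ.range_subtype hψ⟩

end Resolutions

theorem stmt_0_general (R : Type) [Ring R] (M : Type) [AddCommGroup M] [Module Rᵐᵒᵖ M]
    (n : ℕ) (hM : IsFPMod Rᵐᵒᵖ (n + 1) M) (I : Type) :
    ∀ i : ℕ, 0 < i → i ≤ n → TorIsZero R M (I → R) i := by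
  rintro (_ | m) hi hin
  · exact absurd hi (lt_irrefl 0)
  intro res
  obtain ⟨Q, _, _, ψ, hψ, hdψ, hQ⟩ := res.exists_fpFlat_syzygy (fpFlat_pi I) m
  obtain ⟨d, φ, hφ, hker⟩ := isFPMod_succ_iff.1 (hM.of_le (by omega : m + 2 ≤ n + 1))
  exact RTensor.mapRight_exact_of_injective (res.exact m)
    (RTensor.mapRight_injective_of_mapLeft_injective (LinearMap.exact_subtype_ker_map φ) hφ
      hdψ.range_subtype hψ (Submodule.injective_subtype _)
      (hQ _ hker d _ (Submodule.injective_subtype _)))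

/-- If `M` is a right `R`-module of type `FP_{n+1}` with `n ≥ 1`, then
`Tor_i^R(M, ∏_I R) = 0` for all `0 < i ≤ n` and every index set `I`. -/
theorem stmt_0 (R : Type) [Ring R] (M : Type) [AddCommGroup M] [Module Rᵐᵒᵖ M]
    (n : ℕ) (hn : 1 ≤ n) (hM : IsFPMod Rᵐᵒᵖ (n + 1) M) (I : Type) :
    ∀ i : ℕ, 0 < i → i ≤ n → TorIsZero R M (I → R) i :=
  stmt_0_general R M n hM I
end
end

section
/- The wreath product ℤ ≀ ℤ = (⊕_{i∈ℤ} ℤ) ⋊ ℤ, where ℤ acts by shifting coordinates, is residually {poly-ℤ and virtually abelian}: for every nontrivial element g there is a quotient of ℤ ≀ ℤ that is both poly-ℤ and virtually abelian in which the image of g is nontrivial. -/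
noncomputable section
open Function

/-- The shift automorphism of `⊕_{i ∈ ℤ} ℤ`, shifting coordinates by one. -/
def shiftAut : (ℤ →₀ ℤ) ≃+ (ℤ →₀ ℤ) := Finsupp.domCongr (Equiv.addLeft 1)

/-- The action of `ℤ` on `⊕_{i ∈ ℤ} ℤ` by shifting coordinates. -/
def wrAction : Multiplicative ℤ →* MulAut (Multiplicative (ℤ →₀ ℤ)) :=
  zpowersHom _ (AddEquiv.toMultiplicative shiftAut)

/-- The wreath product `ℤ ≀ ℤ = (⊕_{i ∈ ℤ} ℤ) ⋊ ℤ`. -/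
def WrGroup : Type := Multiplicative (ℤ →₀ ℤ) ⋊[wrAction] Multiplicative ℤ

instance : Group WrGroup :=
  inferInstanceAs (Group (Multiplicative (ℤ →₀ ℤ) ⋊[wrAction] Multiplicative ℤ))

/-- A group is poly-`ℤ` if it admits a finite subnormal series whose successive quotients
are infinite cyclic. -/
def IsPolyZ (Q : Type) [Group Q] : Prop :=
  ∃ (n : ℕ) (s : Fin (n + 1) → Subgroup Q), s 0 = ⊥ ∧ s (Fin.last n) = ⊤ ∧
    ∀ i : Fin n, s i.castSucc ≤ s i.succ ∧
      ∃ f : ↥(s i.succ) →* Multiplicative ℤ, Function.Surjective f ∧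
        f.ker = (s i.castSucc).subgroupOf (s i.succ)

/-- A group is virtually abelian if it has an abelian subgroup of finite index. -/
def IsVirtuallyAbelian (Q : Type) [Group Q] : Prop :=
  ∃ H : Subgroup Q, H.index ≠ 0 ∧ ∀ a b : ↥H, a * b = b * a

/-- The cyclic shift automorphism of `⊕_{i ∈ ℤ/n} ℤ`. -/
def shiftZAut (n : ℕ) : (ZMod n →₀ ℤ) ≃+ (ZMod n →₀ ℤ) :=
  Finsupp.domCongr (Equiv.addLeft (1 : ZMod n))

/-- The action of `ℤ` on `⊕_{i ∈ ℤ/n} ℤ` by cyclic permutation of coordinates. -/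
def wrActionZ (n : ℕ) : Multiplicative ℤ →* MulAut (Multiplicative (ZMod n →₀ ℤ)) :=
  zpowersHom _ (AddEquiv.toMultiplicative (shiftZAut n))

/-- The quotient `(⊕_{i ∈ ℤ/n} ℤ) ⋊ ℤ` of `ℤ ≀ ℤ`. -/
def WrModGroup (n : ℕ) : Type :=
  Multiplicative (ZMod n →₀ ℤ) ⋊[wrActionZ n] Multiplicative ℤ

instance (n : ℕ) : Group (WrModGroup n) :=
  inferInstanceAs (Group (Multiplicative (ZMod n →₀ ℤ) ⋊[wrActionZ n] Multiplicative ℤ))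

/-- Summing coordinates congruent mod `n`: the map `⊕_{i ∈ ℤ} ℤ → ⊕_{i ∈ ℤ/n} ℤ`. -/
def sumModMap (n : ℕ) : (ℤ →₀ ℤ) →+ (ZMod n →₀ ℤ) :=
  Finsupp.mapDomain.addMonoidHom (Int.cast : ℤ → ZMod n)

/-!
A nontrivial `g ∈ ℤ ≀ ℤ` survives in the quotient `(⊕_{ℤ/n} ℤ) ⋊ ℤ` as soon as `n` exceeds twice
the largest `|i|` with `i` in the support of the base component of `g`: then summing coordinates
mod `n` merges no two points of that support. Each such quotient is poly-`ℤ`, being an iterated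
extension of `ℤ` by copies of `ℤ`, and virtually abelian, because the finite-index subgroup of
elements whose `ℤ`-component acts trivially on `ℤ/n` is abelian.
-/

section PolyZ

variable {G H : Type} [Group G] [Group H]

def IsZStep (A B : Subgroup G) : Prop :=
  A ≤ B ∧ ∃ f : ↥B →* Multiplicative ℤ, Surjective f ∧ f.ker = A.subgroupOf B

theorem IsZStep.map {A B : Subgroup G} (h : IsZStep A B) (φ : G →* H) (hφ : Injective φ) :
    IsZStep (A.map φ) (B.map φ) := by
  obtain ⟨hAB, f, hf, hker⟩ := h
  let e := B.equivMapOfInjective φ hφ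
  refine ⟨Subgroup.map_mono hAB, f.comp e.symm.toMonoidHom, hf.comp e.symm.surjective, ?_⟩
  ext x
  obtain ⟨y, rfl⟩ := e.surjective x
  rw [MonoidHom.mem_ker, Subgroup.mem_subgroupOf, Subgroup.coe_equivMapOfInjective_apply,
    Subgroup.mem_map_iff_mem hφ, ← Subgroup.mem_subgroupOf, ← hker]
  simp

theorem isZStep_ker_top (f : G →* Multiplicative ℤ) (hf : Surjective f) : IsZStep f.ker ⊤ := by
  refine ⟨le_top, f.comp (⊤ : Subgroup G).subtype, fun m => ?_, (MonoidHom.comap_ker _ _).symm⟩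
  obtain ⟨x, rfl⟩ := hf m
  exact ⟨⟨x, trivial⟩, rfl⟩

theorem isPolyZ_of_subsingleton [Subsingleton G] : IsPolyZ G :=
  ⟨0, fun _ => ⊥, rfl, Subsingleton.elim _ _, fun i => i.elim0⟩

theorem IsPolyZ.of_mulEquiv (e : G ≃* H) (h : IsPolyZ G) : IsPolyZ H := by
  obtain ⟨n, s, h0, hl, hs⟩ := h
  refine ⟨n, fun i => (s i).map e.toMonoidHom, ?_, ?_, fun i => IsZStep.map (hs i) _ e.injective⟩
  · show (s 0).map _ = ⊥
    rw [h0, Subgroup.map_bot]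
  · show (s _).map _ = ⊤
    rw [hl, Subgroup.map_top_of_surjective _ e.surjective]

theorem IsPolyZ.of_exact {N : Type} [Group N] (i : N →* G) (hi : Injective i)
    (f : G →* Multiplicative ℤ) (hf : Surjective f) (hif : i.range = f.ker) (hN : IsPolyZ N) :
    IsPolyZ G := by
  obtain ⟨n, s, h0, hl, hs⟩ := hN
  refine ⟨n + 1, Fin.snoc (fun k => (s k).map i) ⊤, ?_, Fin.snoc_last _ _, fun k => ?_⟩
  · rw [← Fin.castSucc_zero, Fin.snoc_castSucc, h0, Subgroup.map_bot]
  induction k using Fin.lastCases with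
  | last =>
    rw [Fin.snoc_castSucc, Fin.succ_last, Fin.snoc_last, hl, ← MonoidHom.range_eq_map, hif]
    exact isZStep_ker_top f hf
  | cast j =>
    rw [Fin.snoc_castSucc, Fin.succ_castSucc, Fin.snoc_castSucc]
    exact IsZStep.map (hs j) i hi

theorem IsPolyZ.semidirectProduct {N : Type} [Group N] (φ : Multiplicative ℤ →* MulAut N)
    (h : IsPolyZ N) : IsPolyZ (N ⋊[φ] Multiplicative ℤ) :=
  h.of_exact _ SemidirectProduct.inl_injective _ SemidirectProduct.rightHom_surjective
    SemidirectProduct.range_inl_eq_ker_rightHom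

theorem isPolyZ_finsupp (α : Type) [Finite α] : IsPolyZ (Multiplicative (α →₀ ℤ)) := by
  induction α using Finite.induction_empty_option with
  | of_equiv e h => exact h.of_mulEquiv (Finsupp.domCongr e).toMultiplicative
  | h_empty => exact isPolyZ_of_subsingleton
  | @h_option α _ h =>
    refine h.of_exact (Finsupp.embDomain.addMonoidHom .some).toMultiplicative
      (Finsupp.embDomain_injective _) (Finsupp.applyAddHom none).toMultiplicative
      (fun m => ⟨.ofAdd (Finsupp.single none m.toAdd), by simp⟩) ?_
    ext x
    constructor
    · rintro ⟨y, rfl⟩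
      simp
    · intro hx
      refine ⟨.ofAdd x.toAdd.some, Multiplicative.toAdd.injective (Finsupp.ext ?_)⟩
      rintro (_ | a)
      · simpa using (congrArg Multiplicative.toAdd hx).symm
      · simp [Finsupp.embDomain_some_some]

end PolyZ

section VirtuallyAbelian

variable {G H : Type} [Group G] [Group H]

theorem IsVirtuallyAbelian.of_surjective (f : G →* H) (hf : Surjective f)
    (h : IsVirtuallyAbelian G) : IsVirtuallyAbelian H := by
  obtain ⟨A, hA, hcomm⟩ := h
  refine ⟨A.map f, ne_zero_of_dvd_ne_zero hA (Subgroup.index_map_dvd A hf), ?_⟩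
  rintro ⟨_, a, ha, rfl⟩ ⟨_, b, hb, rfl⟩
  ext
  simpa using congrArg (f ∘ Subtype.val) (hcomm ⟨a, ha⟩ ⟨b, hb⟩)

theorem IsVirtuallyAbelian.semidirectProduct {N K : Type} [CommGroup N] [CommGroup K]
    (φ : K →* MulAut N) (hφ : φ.ker.index ≠ 0) : IsVirtuallyAbelian (N ⋊[φ] K) := by
  refine ⟨φ.ker.comap SemidirectProduct.rightHom,
    by rwa [Subgroup.index_comap_of_surjective _ SemidirectProduct.rightHom_surjective], ?_⟩
  rintro ⟨a, ha⟩ ⟨b, hb⟩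
  rw [Subgroup.mem_comap, MonoidHom.mem_ker, SemidirectProduct.rightHom_eq_right] at ha hb
  ext : 1
  ext
  · simp [ha, hb, mul_comm]
  · simp [mul_comm]

end VirtuallyAbelian

def translateAut (α M : Type*) [AddGroup α] [AddCommMonoid M] :
    Multiplicative α →* MulAut (Multiplicative (α →₀ M)) where
  toFun a := (Finsupp.domCongr (Equiv.addLeft a.toAdd)).toMultiplicative
  map_one' := by ext; simp [← Equiv.Perm.inv_def]
  map_mul' a b := by ext; simp [← Equiv.Perm.inv_def, Equiv.Perm.mul_apply]

theorem Finsupp.mapDomain_domCongr_addLeft {α β M : Type*} [AddGroup α] [AddGroup β]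
    [AddCommMonoid M] (ψ : α →+ β) (a : α) (f : α →₀ M) :
    Finsupp.mapDomain ψ (Finsupp.domCongr (Equiv.addLeft a) f)
      = Finsupp.domCongr (Equiv.addLeft (ψ a)) (Finsupp.mapDomain ψ f) := by
  simp only [Finsupp.domCongr_apply, Finsupp.equivMapDomain_eq_mapDomain,
    ← Finsupp.mapDomain_comp]
  congr 1
  funext x
  simp

theorem wrAction_eq_translateAut : wrAction = translateAut ℤ ℤ :=
  MonoidHom.ext_mint (by ext; simp [wrAction, shiftAut, translateAut])

theorem wrActionZ_eq_translateAut (n : ℕ) :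
    wrActionZ n = (translateAut (ZMod n) ℤ).comp (Int.castAddHom (ZMod n)).toMultiplicative :=
  MonoidHom.ext_mint (by ext; simp [wrActionZ, shiftZAut, translateAut])

theorem index_ker_wrActionZ_ne_zero (n : ℕ) [NeZero n] : (wrActionZ n).ker.index ≠ 0 := by
  rw [Subgroup.index_ker, wrActionZ_eq_translateAut, MonoidHom.range_comp]
  -- the action factors through the finite group `ℤ/n`
  exact Nat.card_ne_zero.2 ⟨inferInstance, ((Set.toFinite _).image _).to_subtype⟩

theorem isVirtuallyAbelian_wrModGroup (n : ℕ) [NeZero n] : IsVirtuallyAbelian (WrModGroup n) :=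
  IsVirtuallyAbelian.semidirectProduct (wrActionZ n) (index_ker_wrActionZ_ne_zero n)

theorem isPolyZ_wrModGroup (n : ℕ) [NeZero n] : IsPolyZ (WrModGroup n) :=
  (isPolyZ_finsupp (ZMod n)).semidirectProduct (wrActionZ n)

def sumModHom (n : ℕ) : WrGroup →* WrModGroup n :=
  SemidirectProduct.map (sumModMap n).toMultiplicative (MonoidHom.id _) fun k => by
    refine MonoidHom.ext fun x => ?_
    rw [wrAction_eq_translateAut, wrActionZ_eq_translateAut]
    exact congrArg Multiplicative.ofAdd
      (Finsupp.mapDomain_domCongr_addLeft (Int.castAddHom (ZMod n)) k.toAdd x.toAdd)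

theorem sumModHom_surjective (n : ℕ) : Surjective (sumModHom n) := by
  rintro ⟨a, k⟩
  obtain ⟨f, hf⟩ := Finsupp.mapDomain_surjective ZMod.intCast_surjective a.toAdd
  exact ⟨⟨.ofAdd f, k⟩, congrArg₂ SemidirectProduct.mk (congrArg Multiplicative.ofAdd hf) rfl⟩

theorem exists_intCast_injOn (s : Finset ℤ) :
    ∃ n : ℕ, n ≠ 0 ∧ Set.InjOn (Int.cast : ℤ → ZMod n) s := by
  refine ⟨2 * s.sup Int.natAbs + 1, by omega, fun a ha b hb hab => ?_⟩
  have ha' := Finset.le_sup (f := Int.natAbs) ha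
  have hb' := Finset.le_sup (f := Int.natAbs) hb
  rw [ZMod.intCast_eq_intCast_iff_dvd_sub] at hab
  have := Int.eq_zero_of_abs_lt_dvd hab (by rw [abs_lt]; push_cast; omega)
  omega

theorem exists_sumModHom_ne_one {g : WrGroup} (hg : g ≠ 1) :
    ∃ n : ℕ, NeZero n ∧ sumModHom n g ≠ 1 := by
  obtain ⟨n, hn, hinj⟩ := exists_intCast_injOn (SemidirectProduct.left g).toAdd.support
  refine ⟨n, ⟨hn⟩, fun h => hg ?_⟩
  have hleft : Finsupp.mapDomain (Int.cast : ℤ → ZMod n) (SemidirectProduct.left g).toAdd = 0 :=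
    congrArg (fun x => (SemidirectProduct.left x).toAdd) h
  have hright : SemidirectProduct.right g = 1 := congrArg SemidirectProduct.right h
  have hzero : (SemidirectProduct.left g).toAdd = 0 :=
    Finsupp.mapDomain_injOn _ hinj (by simp) (by simp) (hleft.trans Finsupp.mapDomain_zero.symm)
  exact SemidirectProduct.ext hzero hright

/-- The wreath product `ℤ ≀ ℤ` is residually {poly-`ℤ` and virtually
abelian}: every nontrivial element survives in a quotient which is both poly-`ℤ` and
virtually abelian. -/
theorem stmt_12 :
    ∀ g : WrGroup, g ≠ 1 →
      ∃ (K : Subgroup WrGroup) (hK : K.Normal), g ∉ K ∧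
        (letI := hK
         IsPolyZ (WrGroup ⧸ K) ∧ IsVirtuallyAbelian (WrGroup ⧸ K)) := by
  intro g hg
  obtain ⟨n, _, hgn⟩ := exists_sumModHom_ne_one hg
  let e := QuotientGroup.quotientKerEquivOfSurjective _ (sumModHom_surjective n)
  exact ⟨(sumModHom n).ker, inferInstance, hgn, (isPolyZ_wrModGroup n).of_mulEquiv e.symm,
    (isVirtuallyAbelian_wrModGroup n).of_surjective e.symm.toMonoidHom e.symm.surjective⟩
end
end
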